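/- arXiv:2302.05992 — 4 statements merged into one kernel-verified Lean document; each statement's English description precedes it below -/
import Mathlib

section
/- Let e_n and p_n be elements of a commutative ℚ-algebra satisfying Newton's identities n·e_n = ∑_{i=1}^{n} (-1)^{i+1} e_{n-i} p_i (with e_0 = 1) for all n ≥ 1. If φ is a ℚ-algebra homomorphism to ℚ[t] with φ(p_a) = (t-1)^a - (-1)^a for all a ≥ 1, then φ(e_n) = t for all n ≥ 1. -/
open Polynomial Finset

lemma aux_term (i : ℕ) :
    (-1 : ℚ[X])^(i+1) * ((X - 1)^i - (-1)^i) = 1 - (1 - X)^i := by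
  have h1 : ((-1 : ℚ[X]) * (X - 1))^i = (1 - X)^i := by ring_nf
  have h2 : ((-1 : ℚ[X]) * (-1))^i = 1 := by norm_num
  rw [mul_pow] at h1 h2
  rw [pow_succ]
  linear_combination (-1 : ℚ[X]) * h1 + h2

lemma auxL (n : ℕ) :
    (X : ℚ[X]) * ∑ i ∈ Finset.Icc 1 n, (-1 : ℚ[X])^(i+1) * ((X - 1)^i - (-1)^i)
      = (n : ℚ[X]) * X - (1 - X) + (1 - X)^(n+1) := by
  induction n with
  | zero => simp
  | succ m ih =>
    rw [Finset.sum_Icc_succ_top (by omega), mul_add, ih, aux_term]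
    push_cast
    ring

theorem stmt3 {A : Type*} [CommRing A] [Algebra ℚ A] (e p : ℕ → A)
    (he0 : e 0 = 1)
    (hNewton : ∀ n : ℕ, 1 ≤ n →
      (n : A) * e n = ∑ i ∈ Finset.Icc 1 n, (-1 : A)^(i+1) * e (n - i) * p i)
    (φ : A →ₐ[ℚ] Polynomial ℚ)
    (hp : ∀ a : ℕ, 1 ≤ a → φ (p a) = (Polynomial.X - 1)^a - (-1)^a)
    (n : ℕ) (hn : 1 ≤ n) : φ (e n) = Polynomial.X := by
  induction n using Nat.strong_induction_on with
  | _ n ih =>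
  obtain ⟨m, rfl⟩ : ∃ m, n = m + 1 := ⟨n - 1, by omega⟩
  have h := congrArg φ (hNewton (m+1) (by omega))
  rw [map_mul, map_natCast, map_sum] at h
  have hsum : ∑ i ∈ Finset.Icc 1 (m+1), φ ((-1)^(i+1) * e (m+1-i) * p i)
      = (X : ℚ[X]) * (∑ i ∈ Finset.Icc 1 m, (-1 : ℚ[X])^(i+1) * ((X-1)^i - (-1)^i))
        + (-1 : ℚ[X])^(m+1+1) * ((X-1)^(m+1) - (-1)^(m+1)) := by
    rw [Finset.sum_Icc_succ_top (by omega), Finset.mul_sum]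
    congr 1
    · apply Finset.sum_congr rfl
      intro i hi
      simp only [Finset.mem_Icc] at hi
      rw [map_mul, map_mul, hp i hi.1, ih (m+1-i) (by omega) (by omega)]
      simp only [map_pow, map_neg, map_one]
      ring
    · rw [map_mul, map_mul, hp (m+1) (by omega)]
      simp only [Nat.sub_self, he0, map_pow, map_neg, map_one]
      ring
  rw [hsum, auxL, aux_term] at h
  have hne : ((m+1 : ℕ) : ℚ[X]) ≠ 0 := by
    exact Nat.cast_ne_zero.mpr (by omega)
  apply mul_left_cancel₀ hne
  rw [h]
  push_cast
  ring
end

section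
/- Let Σ be a doubly weighted signed graph and e₀ a positive (non-loop) edge. Then X_{(Σ,w)} = X_{(Σ∖e₀,w)} - X_{(Σ/e₀,w̃)}, where w̃ assigns the componentwise sum of weights to the merged vertex. -/
open Finset

/-- A signed graph with vertex set `V` and edge set `E`: each edge `e` has endpoints
`fst e`, `snd e` and a sign `sgn e` (`true` = positive, `false` = negative). -/
structure SignedGraph (V : Type*) (E : Type*) where
  fst : E → V
  snd : E → V
  sgn : E → Bool

/- Chromatic `B`-symmetric function of a doubly weighted signed graph, with colors
taken from a finite color set `S ⊆ ℤ`: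
`X_{(Σ,w)} = ∑_{κ proper} ∏_v x_{κ(v)}^{w₊(v)} x_{-κ(v)}^{w₋(v)}`, where `κ` is proper
iff `κ(u) ≠ sgn(e)·κ(v)` for every edge `e : uv`. -/
open Classical in
noncomputable def XB {V E : Type*} [Fintype V] [DecidableEq V] (G : SignedGraph V E)
    (wp wm : V → ℕ) (S : Finset ℤ) : MvPolynomial ℤ ℚ :=
  ∑ κ ∈ Fintype.piFinset (fun _ : V => S),
    if ∀ e : E, κ (G.fst e) ≠ (if G.sgn e then κ (G.snd e) else -κ (G.snd e)) then
      ∏ x : V, (MvPolynomial.X (κ x))^(wp x) * (MvPolynomial.X (-κ x))^(wm x)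
    else 0

open Classical in
lemma myaux {V : Type*} [Fintype V] [DecidableEq V] (S : Finset ℤ) (wp wm : V → ℕ)
    (f0 s0 : V) (hne : f0 ≠ s0)
    (P : (V → ℤ) → Prop) (P' : ({x : V // x ≠ s0} → ℤ) → Prop)
    (hPP' : ∀ κ' : {x : V // x ≠ s0} → ℤ,
      P' κ' ↔ P (fun x => if h : x = s0 then κ' ⟨f0, hne⟩ else κ' ⟨x, h⟩)) :
    (∑ κ' ∈ Fintype.piFinset (fun _ : {x : V // x ≠ s0} => S),
      if P' κ' then ∏ a : {x : V // x ≠ s0},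
          MvPolynomial.X (κ' a) ^ (if (a : V) = f0 then wp f0 + wp s0 else wp a.1)
          * MvPolynomial.X (-κ' a) ^ (if (a : V) = f0 then wm f0 + wm s0 else wm a.1)
      else 0)
    = ∑ κ ∈ Fintype.piFinset (fun _ : V => S),
        if P κ ∧ κ f0 = κ s0 then
          ∏ x : V, MvPolynomial.X (κ x) ^ wp x * MvPolynomial.X (-κ x) ^ wm x
        else (0 : MvPolynomial ℤ ℚ) := by
  classical
  have hfilter :
      (∑ κ ∈ Fintype.piFinset (fun _ : V => S),
        if P κ ∧ κ f0 = κ s0 then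
          ∏ x : V, MvPolynomial.X (κ x) ^ wp x * MvPolynomial.X (-κ x) ^ wm x
        else (0 : MvPolynomial ℤ ℚ))
      = ∑ κ ∈ (Fintype.piFinset (fun _ : V => S)).filter (fun κ => κ f0 = κ s0),
          if P κ then ∏ x : V, MvPolynomial.X (κ x) ^ wp x * MvPolynomial.X (-κ x) ^ wm x
          else 0 := by
    rw [Finset.sum_filter]
    refine Finset.sum_congr rfl fun κ _ => ?_
    by_cases h1 : P κ <;> by_cases h2 : κ f0 = κ s0 <;> simp [h1, h2]
  rw [hfilter]
  refine Finset.sum_nbij'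
    (fun κ' (x : V) => if h : x = s0 then κ' ⟨f0, hne⟩ else κ' ⟨x, h⟩)
    (fun κ a => κ a.1) ?_ ?_ ?_ ?_ ?_
  · intro κ' hκ'
    rw [Fintype.mem_piFinset] at hκ'
    rw [Finset.mem_filter, Fintype.mem_piFinset]
    refine ⟨fun x => ?_, ?_⟩
    · by_cases h : x = s0 <;> simp [h, hκ']
    · simp [hne]
  · intro κ hκ
    rw [Finset.mem_filter, Fintype.mem_piFinset] at hκ
    rw [Fintype.mem_piFinset]
    exact fun a => hκ.1 a.1
  · intro κ' _
    funext a
    simp [a.2]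
  · intro κ hκ
    rw [Finset.mem_filter] at hκ
    funext x
    by_cases h : x = s0
    · subst h; simpa using hκ.2
    · simp [h]
  · intro κ' _
    beta_reduce
    rw [hPP']
    by_cases hp : P (fun x => if h : x = s0 then κ' ⟨f0, hne⟩ else κ' ⟨x, h⟩)
    · rw [if_pos hp, if_pos hp]
      have hsub : ∀ F : V → MvPolynomial ℤ ℚ,
          (∏ x ∈ univ.erase s0, F x) = ∏ a : {x : V // x ≠ s0}, F a.1 :=
        fun F => Finset.prod_subtype (univ.erase s0) (fun x => by simp [Finset.mem_erase]) F
      have step1 :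
          (∏ x : V,
            (MvPolynomial.X (if h : x = s0 then κ' ⟨f0, hne⟩ else κ' ⟨x, h⟩) ^ wp x
            * MvPolynomial.X (-(if h : x = s0 then κ' ⟨f0, hne⟩ else κ' ⟨x, h⟩)) ^ wm x
              : MvPolynomial ℤ ℚ))
          = (MvPolynomial.X (κ' ⟨f0, hne⟩) ^ wp s0 * MvPolynomial.X (-κ' ⟨f0, hne⟩) ^ wm s0)
            * ∏ a : {x : V // x ≠ s0},
                MvPolynomial.X (κ' a) ^ wp a.1 * MvPolynomial.X (-κ' a) ^ wm a.1 := by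
        rw [← Finset.mul_prod_erase univ _ (Finset.mem_univ s0), hsub]
        congr 1
        · simp
        · exact Finset.prod_congr rfl fun a _ => by simp [a.2]
      have step2 :
          (∏ a : {x : V // x ≠ s0},
            (MvPolynomial.X (κ' a) ^ (if (a : V) = f0 then wp f0 + wp s0 else wp a.1)
            * MvPolynomial.X (-κ' a) ^ (if (a : V) = f0 then wm f0 + wm s0 else wm a.1)
              : MvPolynomial ℤ ℚ))
          = (∏ a : {x : V // x ≠ s0},
              MvPolynomial.X (κ' a) ^ wp a.1 * MvPolynomial.X (-κ' a) ^ wm a.1)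
            * (MvPolynomial.X (κ' ⟨f0, hne⟩) ^ wp s0
                * MvPolynomial.X (-κ' ⟨f0, hne⟩) ^ wm s0) := by
        have hpera : ∀ a : {x : V // x ≠ s0},
            (MvPolynomial.X (κ' a) ^ (if (a : V) = f0 then wp f0 + wp s0 else wp a.1)
            * MvPolynomial.X (-κ' a) ^ (if (a : V) = f0 then wm f0 + wm s0 else wm a.1)
              : MvPolynomial ℤ ℚ)
            = (MvPolynomial.X (κ' a) ^ wp a.1 * MvPolynomial.X (-κ' a) ^ wm a.1)
              * (if a = ⟨f0, hne⟩ then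
                  MvPolynomial.X (κ' a) ^ wp s0 * MvPolynomial.X (-κ' a) ^ wm s0 else 1) := by
          intro a
          by_cases h : (a : V) = f0
          · have ha : a = ⟨f0, hne⟩ := Subtype.ext h
            rw [if_pos h, if_pos h, if_pos ha, h, pow_add, pow_add]
            ring
          · have ha : a ≠ ⟨f0, hne⟩ := fun hc => h (by rw [hc])
            rw [if_neg h, if_neg h, if_neg ha, mul_one]
        rw [Finset.prod_congr rfl (fun a _ => hpera a), Finset.prod_mul_distrib,
          Finset.prod_ite_eq' univ (⟨f0, hne⟩ : {x : V // x ≠ s0})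
            (fun a => MvPolynomial.X (κ' a) ^ wp s0 * MvPolynomial.X (-κ' a) ^ wm s0),
          if_pos (Finset.mem_univ _)]
      rw [step2, step1]
      exact mul_comm _ _
    · rw [if_neg hp, if_neg hp]

/-- Deletion-contraction for a positive non-loop edge `e₀` of a doubly weighted signed
graph: `X_{(Σ,w)} = X_{(Σ∖e₀,w)} - X_{(Σ/e₀,w̃)}`.  In the contraction the vertex
`snd e₀` is merged into `fst e₀`, whose double weight becomes the componentwise sum. -/
theorem stmt8 {V E : Type*} [Fintype V] [DecidableEq V] (G : SignedGraph V E)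
    (e₀ : E) (hpos : G.sgn e₀ = true) (hne : G.fst e₀ ≠ G.snd e₀)
    (wp wm : V → ℕ) (S : Finset ℤ) :
    XB G wp wm S
      = XB (⟨fun e => G.fst e.1, fun e => G.snd e.1, fun e => G.sgn e.1⟩ :
              SignedGraph V {e : E // e ≠ e₀}) wp wm S
        - XB (V := {x : V // x ≠ G.snd e₀}) (E := {e : E // e ≠ e₀})
            ⟨fun e => if h : G.fst e.1 = G.snd e₀ then ⟨G.fst e₀, hne⟩ else ⟨G.fst e.1, h⟩,
             fun e => if h : G.snd e.1 = G.snd e₀ then ⟨G.fst e₀, hne⟩ else ⟨G.snd e.1, h⟩,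
             fun e => G.sgn e.1⟩
            (fun a => if (a : V) = G.fst e₀ then wp (G.fst e₀) + wp (G.snd e₀) else wp a.1)
            (fun a => if (a : V) = G.fst e₀ then wm (G.fst e₀) + wm (G.snd e₀) else wm a.1)
            S := by
  classical
  rw [eq_sub_iff_add_eq]
  unfold XB
  dsimp only
  have hext : ∀ (κ' : {x : V // x ≠ G.snd e₀} → ℤ) (v : V) (hv : v ≠ G.snd e₀),
      (fun x => if h : x = G.snd e₀ then κ' ⟨G.fst e₀, hne⟩ else κ' ⟨x, h⟩)
        ((if h : v = G.snd e₀ then (⟨G.fst e₀, hne⟩ : {x : V // x ≠ G.snd e₀})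
            else ⟨v, h⟩) : {x : V // x ≠ G.snd e₀}).1
        = κ' (if h : v = G.snd e₀ then ⟨G.fst e₀, hne⟩ else ⟨v, h⟩) := by
    intro κ' v hv
    by_cases h : v = G.snd e₀ <;> simp [h, hne]
  have key := myaux S wp wm (G.fst e₀) (G.snd e₀) hne
    (fun κ => ∀ e : {e : E // e ≠ e₀},
      κ (G.fst e.1) ≠ if G.sgn e.1 = true then κ (G.snd e.1) else -κ (G.snd e.1))
    (fun κ' => ∀ e : {e : E // e ≠ e₀},
      κ' (if h : G.fst e.1 = G.snd e₀ then ⟨G.fst e₀, hne⟩ else ⟨G.fst e.1, h⟩)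
        ≠ if G.sgn e.1 = true then
            κ' (if h : G.snd e.1 = G.snd e₀ then ⟨G.fst e₀, hne⟩ else ⟨G.snd e.1, h⟩)
          else -κ' (if h : G.snd e.1 = G.snd e₀ then ⟨G.fst e₀, hne⟩ else ⟨G.snd e.1, h⟩))
    (by
      intro κ'
      refine forall_congr' fun e => ?_
      have h1 : (fun x => if h : x = G.snd e₀ then κ' ⟨G.fst e₀, hne⟩ else κ' ⟨x, h⟩)
          (G.fst e.1) = κ' (if h : G.fst e.1 = G.snd e₀ then ⟨G.fst e₀, hne⟩
            else ⟨G.fst e.1, h⟩) := by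
        by_cases h : G.fst e.1 = G.snd e₀ <;> simp [h]
      have h2 : (fun x => if h : x = G.snd e₀ then κ' ⟨G.fst e₀, hne⟩ else κ' ⟨x, h⟩)
          (G.snd e.1) = κ' (if h : G.snd e.1 = G.snd e₀ then ⟨G.fst e₀, hne⟩
            else ⟨G.snd e.1, h⟩) := by
        by_cases h : G.snd e.1 = G.snd e₀ <;> simp [h]
      rw [← h1, ← h2])
  rw [key]
  have hsplit : ∀ κ : V → ℤ,
      (∀ e : E, κ (G.fst e) ≠ if G.sgn e = true then κ (G.snd e) else -κ (G.snd e))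
        ↔ ((∀ e : {e : E // e ≠ e₀},
              κ (G.fst e.1) ≠ if G.sgn e.1 = true then κ (G.snd e.1) else -κ (G.snd e.1))
            ∧ κ (G.fst e₀) ≠ κ (G.snd e₀)) := by
    intro κ
    constructor
    · intro h
      refine ⟨fun e => h e.1, ?_⟩
      have := h e₀
      rwa [hpos, if_pos rfl] at this
    · rintro ⟨h1, h2⟩ e
      by_cases he : e = e₀
      · subst he; rw [hpos]; simpa using h2
      · exact h1 ⟨e, he⟩
  rw [Finset.sum_congr rfl (fun κ _ => if_congr (hsplit κ) rfl rfl), ← Finset.sum_add_distrib]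
  refine Finset.sum_congr rfl fun κ _ => ?_
  by_cases h1 : ∀ e : {e : E // e ≠ e₀},
      κ (G.fst e.1) ≠ if G.sgn e.1 = true then κ (G.snd e.1) else -κ (G.snd e.1)
  · by_cases h2 : κ (G.fst e₀) = κ (G.snd e₀) <;> simp [h1, h2]
  · simp only [Subtype.forall, ne_eq] at h1
    simp [h1]
end

section
/- The chromatic B-symmetric function of a doubly weighted signed graph is invariant under switching at a vertex: X_{(Σ,w)} = X_{(Σ^{v₀}, w^{v₀})}, where switching at v₀ negates the sign of every non-loop edge incident to v₀ and swaps the two weight components at v₀. -/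
open Finset

/- Invariance under switching at a vertex `v₀`: the signs of all non-loop edges
incident to `v₀` are flipped, and the two weight components at `v₀` are swapped. -/
open Classical in
theorem stmt9 {V E : Type*} [Fintype V] [DecidableEq V] (G : SignedGraph V E)
    (v₀ : V) (wp wm : V → ℕ) (S : Finset ℤ) (hS : ∀ i ∈ S, -i ∈ S) :
    XB G wp wm S
      = XB ⟨G.fst, G.snd,
            fun e => if G.fst e ≠ G.snd e ∧ (G.fst e = v₀ ∨ G.snd e = v₀)
                     then !G.sgn e else G.sgn e⟩
          (fun x => if x = v₀ then wm v₀ else wp x)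
          (fun x => if x = v₀ then wp v₀ else wm x) S := by
    classical
  unfold XB
  refine Finset.sum_nbij' (i := fun κ x => if x = v₀ then -κ x else κ x)
    (j := fun κ x => if x = v₀ then -κ x else κ x) ?_ ?_ ?_ ?_ ?_
  · intro κ hκ
    rw [Fintype.mem_piFinset] at hκ ⊢
    intro x
    split_ifs with h
    · exact hS _ (hκ x)
    · exact hκ x
  · intro κ hκ
    rw [Fintype.mem_piFinset] at hκ ⊢
    intro x
    split_ifs with h
    · exact hS _ (hκ x)
    · exact hκ x
  · intro κ _; funext x; by_cases h : x = v₀ <;> simp [h]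
  · intro κ _; funext x; by_cases h : x = v₀ <;> simp [h]
  · intro κ _
    have hcond : (∀ e : E, κ (G.fst e) ≠ (if G.sgn e then κ (G.snd e) else -κ (G.snd e)))
        ↔ (∀ e : E, (if G.fst e = v₀ then -κ (G.fst e) else κ (G.fst e)) ≠
            (if (if G.fst e ≠ G.snd e ∧ (G.fst e = v₀ ∨ G.snd e = v₀) then !G.sgn e else G.sgn e)
              then (if G.snd e = v₀ then -κ (G.snd e) else κ (G.snd e))
              else -(if G.snd e = v₀ then -κ (G.snd e) else κ (G.snd e)))) := by
      apply forall_congr'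
      intro e
      by_cases h3 : G.fst e = G.snd e
      · by_cases h1 : G.fst e = v₀ <;> by_cases hs : G.sgn e <;>
          simp [← h3, h1, hs, @eq_comm _ v₀] <;> omega
      · by_cases h1 : G.fst e = v₀ <;> by_cases h2 : G.snd e = v₀ <;>
          first
          | exact absurd (h1.trans h2.symm) h3
          | (by_cases hs : G.sgn e <;> simp [h1, h2, h3, hs, @eq_comm _ v₀] <;> omega)
    rw [if_congr hcond rfl rfl]
    split_ifs with h
    · apply Finset.prod_congr rfl
      intro x _
      by_cases hx : x = v₀
      · subst hx; simp; ring
      · simp [hx]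
    · rfl
end

section
/- For any fixed proper coloring structure: the set of proper colorings of a signed graph Σ is the disjoint union over acyclic orientations P of Σ of the sets C(P) of colorings preserving P; every proper coloring preserves a unique acyclic orientation. -/
variable {V E : Type*}

/-- An orientation of a signed graph is encoded by `o : E → Bool`.  For a positive
edge `e : uv`, `o e = true` means the edge is directed `u → v`.  For a negative edge,
`o e = true` means both arrows point toward the endpoints, `o e = false` that both
point away.  `coverStep G o` is the induced arc relation on the (oriented) covering
graph, whose vertices are pairs `(s, x) : Bool × V` (with `(true, x) = +x` and
`(false, x) = -x`). -/
def coverStep (G : SignedGraph V E) (o : E → Bool) : (Bool × V) → (Bool × V) → Prop :=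
  fun z z' => ∃ e : E,
    if G.sgn e then
      (o e = true ∧ ((z = (true, G.fst e) ∧ z' = (true, G.snd e)) ∨
                     (z = (false, G.snd e) ∧ z' = (false, G.fst e)))) ∨
      (o e = false ∧ ((z = (true, G.snd e) ∧ z' = (true, G.fst e)) ∨
                      (z = (false, G.fst e) ∧ z' = (false, G.snd e))))
    else
      (o e = true ∧ ((z = (false, G.snd e) ∧ z' = (true, G.fst e)) ∨
                     (z = (false, G.fst e) ∧ z' = (true, G.snd e)))) ∨
      (o e = false ∧ ((z = (true, G.fst e) ∧ z' = (false, G.snd e)) ∨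
                      (z = (true, G.snd e) ∧ z' = (false, G.fst e))))

/-- An orientation is acyclic when the induced orientation of the covering graph has
no directed cycle. -/
def IsAcyclicOrientation (G : SignedGraph V E) (o : E → Bool) : Prop :=
  ∀ z : Bool × V, ¬ Relation.TransGen (coverStep G o) z z

/-- A coloring `κ` preserves an orientation `o` when, in the induced coloring of the
covering graph (`+x ↦ κ x`, `-x ↦ -κ x`), every arc points from a smaller color to a
larger color. -/
def Preserves (G : SignedGraph V E) (κ : V → ℤ) (o : E → Bool) : Prop :=
  ∀ z z' : Bool × V, coverStep G o z z' →
    (if z.1 then κ z.2 else -κ z.2) < (if z'.1 then κ z'.2 else -κ z'.2)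

/-- A coloring is proper iff `κ(u) ≠ sgn(e)·κ(v)` for every edge `e : uv`. -/
def Proper (G : SignedGraph V E) (κ : V → ℤ) : Prop :=
  ∀ e : E, κ (G.fst e) ≠ (if G.sgn e then κ (G.snd e) else -κ (G.snd e))

/-!
Everything is governed by the integer `edgeGap G κ e`, which is `κ v - κ u` on a positive
edge `e : uv` and `κ u + κ v` on a negative one: each arc that `e` contributes to the
covering graph raises the covering color by exactly `±edgeGap G κ e`, the sign being given by
the orientation of `e`. So `κ` preserves `o` exactly when every `o e` records the sign of the
gap, and `κ` is proper exactly when no gap vanishes; hence a proper coloring preserves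
precisely one orientation. That orientation is acyclic because the covering colors strictly
increase along every directed path.
-/

namespace SignedGraph

def coverColor (κ : V → ℤ) (z : Bool × V) : ℤ :=
  if z.1 then κ z.2 else -κ z.2

def edgeGap (G : SignedGraph V E) (κ : V → ℤ) (e : E) : ℤ :=
  if G.sgn e then κ (G.snd e) - κ (G.fst e) else κ (G.fst e) + κ (G.snd e)

theorem exists_coverColor_sub_of_coverStep {G : SignedGraph V E} (κ : V → ℤ) {o : E → Bool}
    {z z' : Bool × V} (h : coverStep G o z z') :
    ∃ e, coverColor κ z' - coverColor κ z = if o e then G.edgeGap κ e else -G.edgeGap κ e := by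
  obtain ⟨e, h⟩ := h
  refine ⟨e, ?_⟩
  unfold edgeGap
  cases hs : G.sgn e <;> cases ho : o e <;>
    simp only [hs, ho, ↓reduceIte, Bool.false_eq_true, Bool.true_eq_false, true_and, false_and,
      or_false, false_or] at h ⊢ <;>
    rcases h with ⟨rfl, rfl⟩ | ⟨rfl, rfl⟩ <;>
    simp only [coverColor, ↓reduceIte, Bool.false_eq_true] <;> ring

theorem exists_coverStep_coverColor_sub (G : SignedGraph V E) (κ : V → ℤ) (o : E → Bool)
    (e : E) : ∃ z z', coverStep G o z z' ∧
      coverColor κ z' - coverColor κ z = if o e then G.edgeGap κ e else -G.edgeGap κ e := by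
  unfold edgeGap
  cases hs : G.sgn e <;> cases ho : o e
  · exact ⟨(true, G.fst e), (false, G.snd e), ⟨e, by simp [hs, ho]⟩, by simp [coverColor]; ring⟩
  · exact ⟨(false, G.snd e), (true, G.fst e), ⟨e, by simp [hs, ho]⟩, by simp [coverColor]⟩
  · exact ⟨(true, G.snd e), (true, G.fst e), ⟨e, by simp [hs, ho]⟩, by simp [coverColor]⟩
  · exact ⟨(true, G.fst e), (true, G.snd e), ⟨e, by simp [hs, ho]⟩, by simp [coverColor]⟩

theorem proper_iff_edgeGap_ne_zero (G : SignedGraph V E) (κ : V → ℤ) :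
    Proper G κ ↔ ∀ e, G.edgeGap κ e ≠ 0 := by
  refine forall_congr' fun e => ?_
  unfold edgeGap
  split <;> omega

theorem preserves_iff_edgeGap (G : SignedGraph V E) (κ : V → ℤ) (o : E → Bool) :
    Preserves G κ o ↔ ∀ e, 0 < if o e then G.edgeGap κ e else -G.edgeGap κ e := by
  constructor
  · intro hp e
    obtain ⟨z, z', hzz', hgain⟩ := exists_coverStep_coverColor_sub G κ o e
    have : coverColor κ z < coverColor κ z' := hp z z' hzz'
    omega
  · intro hgap z z' hzz'
    obtain ⟨e, hgain⟩ := exists_coverColor_sub_of_coverStep κ hzz'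
    have : 0 < coverColor κ z' - coverColor κ z := hgain ▸ hgap e
    exact sub_pos.1 this

theorem preserves_decide_edgeGap_pos {G : SignedGraph V E} {κ : V → ℤ} (hκ : Proper G κ) :
    Preserves G κ fun e => decide (0 < G.edgeGap κ e) := by
  refine (preserves_iff_edgeGap G κ _).2 fun e => ?_
  rcases (((proper_iff_edgeGap_ne_zero G κ).1 hκ) e).lt_or_gt with h | h
  · simp [h, h.not_gt]
  · simp [h]

end SignedGraph

open SignedGraph

theorem Preserves.eq_decide_edgeGap_pos {G : SignedGraph V E} {κ : V → ℤ} {o : E → Bool}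
    (hp : Preserves G κ o) : o = fun e => decide (0 < G.edgeGap κ e) := by
  funext e
  have := (preserves_iff_edgeGap G κ o).1 hp e
  cases ho : o e
  · simp only [ho, Bool.false_eq_true, ↓reduceIte] at this
    simp only [eq_comm (a := false), decide_eq_false_iff_not, not_lt]
    omega
  · simpa [ho] using this

theorem Preserves.coverColor_lt_of_transGen {G : SignedGraph V E} {κ : V → ℤ} {o : E → Bool}
    (hp : Preserves G κ o) {z z' : Bool × V} (h : Relation.TransGen (coverStep G o) z z') :
    coverColor κ z < coverColor κ z' := by
  induction h with
  | single h => exact hp _ _ h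
  | tail _ h ih => exact ih.trans (hp _ _ h)

theorem Preserves.isAcyclicOrientation {G : SignedGraph V E} {κ : V → ℤ} {o : E → Bool}
    (hp : Preserves G κ o) : IsAcyclicOrientation G o :=
  fun _ hz => (hp.coverColor_lt_of_transGen hz).false

/-- Every proper coloring of a signed graph preserves a unique acyclic orientation;
hence the set of proper colorings is the disjoint union, over acyclic orientations
`P`, of the sets `C(P)` of colorings preserving `P`. -/
theorem stmt12 (G : SignedGraph V E) (κ : V → ℤ) (hκ : Proper G κ) :
    ∃! o : E → Bool, IsAcyclicOrientation G o ∧ Preserves G κ o := by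
  have hpres := preserves_decide_edgeGap_pos hκ
  exact ⟨_, ⟨hpres.isAcyclicOrientation, hpres⟩, fun o ⟨_, hp⟩ => hp.eq_decide_edgeGap_pos⟩
end
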